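/- For integers k with ℓ = ⌊k/4⌋ ≥ 8 (so 4ℓ ≤ k ≤ 4ℓ+3), the order of the alternating group A_k satisfies |A_k| ≤ (4ℓ+3)!/2 ≤ |A_{3ℓ}|^{1.7}, i.e., (4ℓ+3)!/2 ≤ ((3ℓ)!/2)^{17/10}. -/
import Mathlib

lemma step10 (ℓ : ℕ) (h : 8 ≤ ℓ) :
    ((4*ℓ+4)*(4*ℓ+5)*(4*ℓ+6)*(4*ℓ+7))^10 ≤ ((3*ℓ+1)*(3*ℓ+2)*(3*ℓ+3))^17 := by
  have h1 : (4*ℓ+4)*(4*ℓ+5)*(4*ℓ+6)*(4*ℓ+7) ≤ (4*ℓ+7)^4 := by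
    have : (4*ℓ+7)^4 = (4*ℓ+7)*(4*ℓ+7)*(4*ℓ+7)*(4*ℓ+7) := by ring
    rw [this]; gcongr <;> omega
  have h2 : (4*ℓ+7) ≤ 2*(3*ℓ+1) := by omega
  calc ((4*ℓ+4)*(4*ℓ+5)*(4*ℓ+6)*(4*ℓ+7))^10
      ≤ ((4*ℓ+7)^4)^10 := Nat.pow_le_pow_left h1 10
    _ = (4*ℓ+7)^40 := by ring
    _ ≤ (2*(3*ℓ+1))^40 := Nat.pow_le_pow_left h2 40
    _ = 2^40 * (3*ℓ+1)^40 := by ring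
    _ ≤ (3*ℓ+1)^11 * (3*ℓ+1)^40 := by
        have : (2:ℕ)^40 ≤ 25^11 := by norm_num
        have h25 : (25:ℕ) ≤ 3*ℓ+1 := by omega
        exact Nat.mul_le_mul_right _ (this.trans (Nat.pow_le_pow_left h25 11))
    _ = ((3*ℓ+1)^3)^17 := by ring
    _ ≤ ((3*ℓ+1)*(3*ℓ+2)*(3*ℓ+3))^17 := by
        apply Nat.pow_le_pow_left
        nlinarith

set_option maxHeartbeats 1000000 in
lemma key10 (ℓ : ℕ) (h : 8 ≤ ℓ) :
    (4*ℓ+3).factorial ^ 10 * 2^7 ≤ (3*ℓ).factorial ^ 17 := by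
  induction ℓ, h using Nat.le_induction with
  | base => norm_num [Nat.factorial]
  | succ n hn ih =>
    have e1 : (4*(n+1)+3).factorial
        = ((4*n+4)*(4*n+5)*(4*n+6)*(4*n+7)) * (4*n+3).factorial := by
      have : 4*(n+1)+3 = (4*n+3) + 4 := by ring
      rw [this]
      simp [Nat.factorial_succ]
      ring
    have e2 : (3*(n+1)).factorial
        = ((3*n+1)*(3*n+2)*(3*n+3)) * (3*n).factorial := by
      have : 3*(n+1) = (3*n) + 3 := by ring
      rw [this]
      simp [Nat.factorial_succ]
      ring
    rw [e1, e2]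
    calc ((4*n+4)*(4*n+5)*(4*n+6)*(4*n+7) * (4*n+3).factorial)^10 * 2^7
        = ((4*n+4)*(4*n+5)*(4*n+6)*(4*n+7))^10 * ((4*n+3).factorial^10 * 2^7) := by
          rw [mul_pow]; ring
      _ ≤ ((3*n+1)*(3*n+2)*(3*n+3))^17 * (3*n).factorial^17 :=
          Nat.mul_le_mul (step10 n hn) ih
      _ = ((3*n+1)*(3*n+2)*(3*n+3) * (3*n).factorial)^17 := (mul_pow _ _ 17).symm


/-- For integers `k` with `ℓ = ⌊k/4⌋ ≥ 8`, the order of the alternating group `A_k`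
satisfies `|A_k| = k!/2 ≤ (4ℓ+3)!/2 ≤ |A_{3ℓ}|^{1.7} = ((3ℓ)!/2)^{17/10}`; the last
inequality is stated arithmetically as `((4ℓ+3)!/2)^10 ≤ ((3ℓ)!/2)^17`. -/
theorem stmt10 (k ℓ : ℕ) (hℓ : ℓ = k / 4) (h8 : 8 ≤ ℓ) :
    k.factorial / 2 ≤ (4 * ℓ + 3).factorial / 2 ∧
      ((4 * ℓ + 3).factorial / 2) ^ 10 ≤ ((3 * ℓ).factorial / 2) ^ 17 := by
  constructor
  · exact Nat.div_le_div_right (Nat.factorial_le (by omega))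
  · have hd1 : 2 ∣ (4*ℓ+3).factorial :=
      Nat.dvd_factorial (by norm_num) (by omega)
    have hd2 : 2 ∣ (3*ℓ).factorial :=
      Nat.dvd_factorial (by norm_num) (by omega)
    have hp1 : 2^10 ∣ (4*ℓ+3).factorial ^ 10 := pow_dvd_pow_of_dvd hd1 10
    rw [Nat.div_pow hd1, Nat.div_pow hd2]
    rw [Nat.le_div_iff_mul_le (by positivity)]
    have : (4*ℓ+3).factorial ^ 10 / 2^10 * 2^17
        = (4*ℓ+3).factorial ^ 10 * 2^7 := by
      rw [show (2:ℕ)^17 = 2^10 * 2^7 by norm_num, ← mul_assoc,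
        Nat.div_mul_cancel hp1]
    rw [this]
    exact key10 ℓ h8
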